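/- arXiv:2307.12120 — 3 statements merged into one kernel-verified Lean document; each statement's English description precedes it below -/
import Mathlib

section
/- Let G be a subgroup of Z_N (with N ≥ 1), where elements of Z_N are identified with their balanced integer representatives in the interval [−⌊(N−1)/2⌋, ⌈(N−1)/2⌉]. Then the number of elements g ∈ G whose balanced representative satisfies |g| ≥ N/4 is exactly |G| + 1 − 2⌈|G|/4⌉. -/
/-!
A subgroup `G` of `ZMod N` of order `m` is the kernel of multiplication by `m`, so with
`N = m * d` its elements are the residues `k * d` for `k < m`. The balanced representative of
`k * d` has absolute value at least `N / 4` exactly when `m ≤ 4 * k ≤ 3 * m`, and there are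
`⌊3m/4⌋ - ⌈m/4⌉ + 1 = m + 1 - 2⌈m/4⌉` such `k`.
-/

def bal (N : ℕ) (g : ZMod N) : ℤ :=
  if g.val ≤ N / 2 then (g.val : ℤ) else (g.val : ℤ) - N

open Finset

@[to_additive]
theorem Subgroup.eq_ker_powMonoidHom_card {α : Type*} [CommGroup α] [IsCyclic α] [Finite α]
    (H : Subgroup α) : H = (powMonoidHom (Nat.card H) : α →* α).ker :=
  Subgroup.eq_of_le_of_card_ge
    (fun _ hx => congrArg Subtype.val (pow_card_eq_one' (x := (⟨_, hx⟩ : H))))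
    (by rw [IsCyclic.card_powMonoidHom_ker,
      Nat.gcd_eq_right (Subgroup.card_subgroup_dvd_card H)])

theorem ZMod.nsmul_eq_zero_iff_dvd_val {N m d : ℕ} [NeZero N] (hN : N = m * d) (x : ZMod N) :
    m • x = 0 ↔ d ∣ x.val := by
  have hm : 0 < m := Nat.pos_of_mul_pos_right (hN ▸ NeZero.pos N)
  rw [← ZMod.natCast_zmod_val x, nsmul_eq_mul, ← Nat.cast_mul, ZMod.natCast_eq_zero_iff,
    ZMod.val_natCast_of_lt x.val_lt]
  subst hN
  exact Nat.mul_dvd_mul_iff_left hm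

theorem ZMod.mem_addSubgroup_iff_dvd_val {N d : ℕ} [NeZero N] {G : AddSubgroup (ZMod N)}
    (hN : N = Nat.card G * d) (x : ZMod N) : x ∈ G ↔ d ∣ x.val := by
  rw [G.eq_ker_nsmulAddMonoidHom_card]
  exact ZMod.nsmul_eq_zero_iff_dvd_val hN x

theorem ZMod.card_filter_dvd_val {N m d : ℕ} [NeZero N] (hN : N = m * d) (p : ℕ → Prop)
    [DecidablePred p] : #{x : ZMod N | d ∣ x.val ∧ p x.val} = #{k ∈ range m | p (k * d)} := by
  have hd : 0 < d := Nat.pos_of_mul_pos_left (hN ▸ NeZero.pos N)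
  have hval : ∀ k < m, ((k * d : ℕ) : ZMod N).val = k * d := fun k hk =>
    ZMod.val_natCast_of_lt (hN ▸ Nat.mul_lt_mul_of_pos_right hk hd)
  symm
  refine card_nbij' (fun k => ((k * d : ℕ) : ZMod N)) (fun x => x.val / d) ?_ ?_ ?_ ?_
  · intro k hk
    obtain ⟨hk, hp⟩ := mem_filter.1 (mem_coe.1 hk)
    simp only [mem_coe, mem_filter, mem_univ, true_and, hval k (mem_range.1 hk)]
    exact ⟨dvd_mul_left d k, hp⟩
  · intro x hx
    obtain ⟨-, hdvd, hp⟩ := mem_filter.1 (mem_coe.1 hx)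
    have hlt : x.val < N := x.val_lt
    refine mem_coe.2 (mem_filter.2 ⟨mem_range.2 ?_, by rwa [Nat.div_mul_cancel hdvd]⟩)
    exact Nat.div_lt_of_lt_mul (by rw [mul_comm]; omega)
  · intro k hk
    simp only [hval k (mem_range.1 (mem_filter.1 (mem_coe.1 hk)).1), Nat.mul_div_cancel k hd]
  · intro x hx
    obtain ⟨-, hdvd, -⟩ := mem_filter.1 (mem_coe.1 hx)
    simp only [Nat.div_mul_cancel hdvd, ZMod.natCast_zmod_val]

theorem le_abs_bal_iff {N : ℕ} [NeZero N] (g : ZMod N) :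
    (N : ℝ) / 4 ≤ |(bal N g : ℝ)| ↔ N ≤ 4 * g.val ∧ 4 * g.val ≤ 3 * N := by
  have hlt := g.val_lt
  rw [div_le_iff₀ (by norm_num), ← Int.cast_abs]
  norm_cast
  unfold bal
  split_ifs with h
  · rw [abs_of_nonneg (by positivity)]; omega
  · rw [abs_of_neg (by omega)]; omega

theorem card_filter_quarter {m : ℕ} (hm : 0 < m) :
    (#{k ∈ range m | m ≤ 4 * k ∧ 4 * k ≤ 3 * m} : ℤ) = m + 1 - 2 * ⌈(m : ℚ) / 4⌉ := by
  have hIcc :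
      {k ∈ range m | m ≤ 4 * k ∧ 4 * k ≤ 3 * m} = Icc ((m + 3) / 4) (m - (m + 3) / 4) := by
    ext k; simp only [mem_filter, mem_range, mem_Icc]; omega
  have hceil : ⌈(m : ℚ) / 4⌉ = ((m + 3) / 4 : ℕ) := by
    have := Rat.ceil_natCast_div_natCast m 4
    push_cast at this
    omega
  rw [hIcc, Nat.card_Icc, hceil]
  omega

theorem stmt6 (N : ℕ) [NeZero N] (G : AddSubgroup (ZMod N)) :
    (Nat.card {g : ZMod N // g ∈ G ∧ (N : ℝ) / 4 ≤ (|bal N g| : ℝ)} : ℤ) =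
      (Nat.card G : ℤ) + 1 - 2 * ⌈(Nat.card G : ℚ) / 4⌉ := by
  classical
  set m := Nat.card G
  have hm : 0 < m := Nat.card_pos
  obtain ⟨d, hN⟩ : m ∣ N := Nat.card_zmod N ▸ G.card_addSubgroup_dvd_card
  have hd : 0 < d := Nat.pos_of_mul_pos_left (hN ▸ NeZero.pos N)
  rw [Nat.card_eq_fintype_card, Fintype.card_subtype]
  simp_rw [ZMod.mem_addSubgroup_iff_dvd_val hN, le_abs_bal_iff]
  rw [ZMod.card_filter_dvd_val hN (fun v => N ≤ 4 * v ∧ 4 * v ≤ 3 * N),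
    ← card_filter_quarter hm]
  congr 2
  refine filter_congr fun k _ => ?_
  simp only [hN, ← mul_assoc, Nat.mul_le_mul_right_iff hd]
end

section
/- Let A ∈ (Z_N)^{n×m} and let G ≤ Z_N^n be the subgroup generated by the columns of A. Let B, C be positive integers with 8BCm < N. Suppose that every element of G can be written as A·x for some integer vector x ∈ [−B,B]^m. Identify Z_N with balanced representatives. Then the map f : G^∨ × [−C,C]^m_int → Z_N^m given by f(s, e) = A^T·s + e is injective, where s ranges over representatives in Z_N^n modulo the annihilator W = {w ∈ Z_N^n : w·g = 0 for all g ∈ G} (i.e., f(s_1,e_1) = f(s_2,e_2) implies s_1 − s_2 ∈ W and e_1 = e_2). -/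
open Matrix

/-- If every integer multiple of `d : ZMod N` is congruent to a small integer, then `d = 0`. -/
lemma aux_small_zmod (N : ℕ) [NeZero N] (M : ℤ) (hM : 4 * M < (N : ℤ)) (d : ZMod N)
    (h : ∀ k : ℤ, ∃ t : ℤ, |t| ≤ M ∧ (k : ZMod N) * d = (t : ZMod N)) : d = 0 := by
  obtain ⟨t₁, ht₁, hd⟩ := h 1
  rw [Int.cast_one, one_mul] at hd
  by_cases h0 : t₁ = 0
  · rw [hd, h0, Int.cast_zero]
  · exfalso
    have ha : 0 < |t₁| := abs_pos.mpr h0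
    set a : ℤ := |t₁| with ha_def
    have h2a : 0 < 2 * a := by linarith
    set k : ℤ := (N : ℤ) / (2 * a) with hk
    have hdm := Int.mul_ediv_add_emod (N : ℤ) (2 * a)
    have hr0 : 0 ≤ (N : ℤ) % (2 * a) := Int.emod_nonneg _ (by linarith)
    have hr1 : (N : ℤ) % (2 * a) < 2 * a := Int.emod_lt_of_pos _ h2a
    set r : ℤ := (N : ℤ) % (2 * a) with hr
    have hka : 2 * a * k = (N : ℤ) - r := by linarith
    have hkpos : 0 < k := by nlinarith
    obtain ⟨t₂, ht₂, hkd⟩ := h k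
    have hcast : ((k * t₁ - t₂ : ℤ) : ZMod N) = 0 := by
      push_cast
      rw [← hd, hkd, sub_self]
    have hdvd : (N : ℤ) ∣ (k * t₁ - t₂) :=
      (ZMod.intCast_zmod_eq_zero_iff_dvd _ N).mp hcast
    have habs : |k * t₁| = k * a := by
      rw [abs_mul, abs_of_pos hkpos]
    have hub : |k * t₁ - t₂| ≤ k * a + M := by
      calc |k * t₁ - t₂| ≤ |k * t₁| + |t₂| := abs_sub _ _
        _ ≤ k * a + M := by rw [habs]; linarith
    have hlb : k * a - M ≤ |k * t₁ - t₂| := by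
      have := abs_sub_abs_le_abs_sub (k * t₁) t₂
      rw [habs] at this
      linarith
    have hkaM : M < k * a := by nlinarith
    have hne : k * t₁ - t₂ ≠ 0 := by
      intro hzero
      rw [hzero, abs_zero] at hlb
      linarith
    have hge := Int.le_of_dvd (abs_pos.mpr hne) ((dvd_abs _ _).mpr hdvd)
    -- but |k*t₁ - t₂| ≤ k*a + M < N since 2*k*a ≤ N and 2M < N/2
    nlinarith

theorem stmt12 (N n m : ℕ) [NeZero N] (A : Matrix (Fin n) (Fin m) (ZMod N))
    (B C : ℕ) (hB : 0 < B) (hC : 0 < C) (hbound : 8 * B * C * m < N)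
    (G : AddSubgroup (Fin n → ZMod N))
    (hG : G = AddSubgroup.closure (Set.range fun j : Fin m => fun i : Fin n => A i j))
    (hsurj : ∀ g ∈ G, ∃ x : Fin m → ℤ, (∀ i, |x i| ≤ (B : ℤ)) ∧
      A.mulVec (fun i => (x i : ZMod N)) = g)
    (s₁ s₂ : Fin n → ZMod N) (e₁ e₂ : Fin m → ℤ)
    (he₁ : ∀ j, |e₁ j| ≤ (C : ℤ)) (he₂ : ∀ j, |e₂ j| ≤ (C : ℤ))
    (heq : (fun j => Aᵀ.mulVec s₁ j + (e₁ j : ZMod N)) =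
           (fun j => Aᵀ.mulVec s₂ j + (e₂ j : ZMod N))) :
    (∀ g ∈ G, ∑ i, (s₁ i - s₂ i) * g i = 0) ∧ e₁ = e₂ := by
  have hNbound : (8 * B * C * m : ℤ) < (N : ℤ) := by exact_mod_cast hbound
  -- key congruence on columns
  have h1 : ∀ j, (∑ i, A i j * (s₁ i - s₂ i)) = ((e₂ j - e₁ j : ℤ) : ZMod N) := by
    intro j
    have h := congrFun heq j
    simp only [Matrix.mulVec, dotProduct, Matrix.transpose_apply] at h
    have hsplit : ∑ i, A i j * (s₁ i - s₂ i)
        = (∑ i, A i j * s₁ i) - ∑ i, A i j * s₂ i := by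
      rw [← Finset.sum_sub_distrib]
      exact Finset.sum_congr rfl fun i _ => by ring
    rw [hsplit]
    push_cast
    linear_combination h
  have key : ∀ g ∈ G, ∃ t : ℤ, |t| ≤ (2 * B * C * m : ℤ) ∧
      (∑ i, (s₁ i - s₂ i) * g i) = (t : ZMod N) := by
    intro g hg
    obtain ⟨x, hx, hAx⟩ := hsurj g hg
    refine ⟨∑ j, x j * (e₂ j - e₁ j), ?_, ?_⟩
    · calc |∑ j, x j * (e₂ j - e₁ j)| ≤ ∑ j, |x j * (e₂ j - e₁ j)| :=
            Finset.abs_sum_le_sum_abs _ _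
        _ ≤ ∑ _j : Fin m, (B : ℤ) * (2 * C) := by
            refine Finset.sum_le_sum fun j _ => ?_
            rw [abs_mul]
            have a1 := abs_le.mp (he₁ j)
            have a2 := abs_le.mp (he₂ j)
            have h2 : |e₂ j - e₁ j| ≤ 2 * C := abs_le.mpr ⟨by linarith, by linarith⟩
            exact mul_le_mul (hx j) h2 (abs_nonneg _) (by positivity)
        _ = (2 * B * C * m : ℤ) := by
            rw [Finset.sum_const, Finset.card_univ, Fintype.card_fin, nsmul_eq_mul]
            ring
    · rw [← hAx]
      simp only [Matrix.mulVec, dotProduct]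
      have hswap : ∑ i, (s₁ i - s₂ i) * ∑ j, A i j * (x j : ZMod N)
          = ∑ j, (x j : ZMod N) * ∑ i, A i j * (s₁ i - s₂ i) := by
        simp only [Finset.mul_sum]
        rw [Finset.sum_comm]
        exact Finset.sum_congr rfl fun j _ => Finset.sum_congr rfl fun i _ => by ring
      rw [hswap]
      simp only [h1]
      rw [Int.cast_sum]
      exact Finset.sum_congr rfl fun j _ => (Int.cast_mul _ _).symm
  have part1 : ∀ g ∈ G, ∑ i, (s₁ i - s₂ i) * g i = 0 := by
    intro g hg
    apply aux_small_zmod N (2 * B * C * m : ℤ) (by linarith) _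
    intro k
    obtain ⟨t, ht, hsum⟩ := key (k • g) (G.zsmul_mem hg k)
    refine ⟨t, ht, ?_⟩
    rw [← hsum, Finset.mul_sum]
    refine Finset.sum_congr rfl fun i _ => ?_
    simp only [Pi.smul_apply, zsmul_eq_mul]
    ring
  refine ⟨part1, ?_⟩
  funext j
  have hm : 0 < m := j.pos
  have hcol : (fun i => A i j) ∈ G := by
    rw [hG]; exact AddSubgroup.subset_closure ⟨j, rfl⟩
  have hzero := part1 _ hcol
  have hz : ((e₂ j - e₁ j : ℤ) : ZMod N) = 0 := by
    rw [← h1 j, ← hzero]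
    exact Finset.sum_congr rfl fun i _ => mul_comm _ _
  have hdvd := (ZMod.intCast_zmod_eq_zero_iff_dvd _ N).mp hz
  have h2C : (2 * C : ℤ) < (N : ℤ) := by
    have hBZ : (1 : ℤ) ≤ B := by exact_mod_cast hB
    have hmZ : (1 : ℤ) ≤ m := by exact_mod_cast hm
    have hCZ : (0 : ℤ) < C := by exact_mod_cast hC
    have hprod : (0 : ℤ) ≤ ((B : ℤ) - 1) * ((m : ℤ) - 1) :=
      mul_nonneg (by linarith) (by linarith)
    nlinarith
  have a1 := abs_le.mp (he₁ j)
  have a2 := abs_le.mp (he₂ j)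
  have hdiff : e₂ j - e₁ j = 0 := by
    rcases eq_or_ne (e₂ j - e₁ j) 0 with h | h
    · exact h
    · exfalso
      have hge := Int.le_of_dvd (abs_pos.mpr h) ((dvd_abs _ _).mpr hdvd)
      have h2 : |e₂ j - e₁ j| ≤ 2 * C := abs_le.mpr ⟨by linarith, by linarith⟩
      linarith
  linarith
end

section
/- Let G be a finite abelian group acting regularly on a set X via *, with pairing χ and states v_h = (1/√|G|) ∑_g χ(g,h) e_{g*x} as above. Fix a, h ∈ G and consider the linear map P on ℂ^X induced by the bijection g*x ↦ (a−g)*x of X (well-defined by regularity). Then P(v_{−h}) = χ(a,−h) · v_h; i.e., the 'reflection composed with translation by a' maps the banknote of serial −h to a global phase times the banknote of serial h. -/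
open Complex Finset

noncomputable def chi {k : ℕ} (n : Fin k → ℕ) (g h : ∀ j, ZMod (n j)) : ℂ :=
  ∏ j, Complex.exp (2 * Real.pi * Complex.I * ((g j).val : ℂ) * ((h j).val : ℂ) / ((n j : ℕ) : ℂ))

noncomputable def vstate {k : ℕ} (n : Fin k → ℕ) [∀ j, NeZero (n j)]
    {X : Type*} [Fintype X] [DecidableEq X]
    (act : (∀ j, ZMod (n j)) → X → X) (x : X) (h : ∀ j, ZMod (n j)) : X → ℂ :=
  fun y => ((Real.sqrt (Fintype.card (∀ j, ZMod (n j))))⁻¹ : ℝ) *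
    ∑ g, chi n g h * (if y = act g x then 1 else 0)

lemma exp_congr (n : ℕ) [NeZero n] (A B : ℤ) (hAB : ((A : ZMod n)) = (B : ZMod n)) :
    Complex.exp (2 * Real.pi * Complex.I * (A : ℂ) / (n : ℂ)) =
    Complex.exp (2 * Real.pi * Complex.I * (B : ℂ) / (n : ℂ)) := by
  obtain ⟨t, ht⟩ : (n : ℤ) ∣ A - B := by
    have : ((A - B : ℤ) : ZMod n) = 0 := by push_cast [hAB]; ring
    exact (ZMod.intCast_zmod_eq_zero_iff_dvd _ n).mp this
  have hn : (n : ℂ) ≠ 0 := Nat.cast_ne_zero.mpr (NeZero.ne n)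
  have hA : (A : ℂ) = (B : ℂ) + (n : ℂ) * (t : ℂ) := by
    have : A = B + n * t := by linarith
    exact_mod_cast congrArg (Int.cast : ℤ → ℂ) this
  have key : (2 * Real.pi * Complex.I * (A : ℂ) / (n : ℂ)) =
      2 * Real.pi * Complex.I * (B : ℂ) / (n : ℂ) + (t : ℂ) * (2 * Real.pi * Complex.I) := by
    rw [hA]; field_simp
  rw [key, Complex.exp_add, Complex.exp_int_mul_two_pi_mul_I, mul_one]

noncomputable def Phi {k : ℕ} (n : Fin k → ℕ) (m : ∀ j, ZMod (n j)) : ℂ :=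
  ∏ j, Complex.exp (2 * Real.pi * Complex.I * ((m j).val : ℂ) / ((n j : ℕ) : ℂ))

lemma Phi_add {k : ℕ} (n : Fin k → ℕ) [∀ j, NeZero (n j)] (m m' : ∀ j, ZMod (n j)) :
    Phi n (m + m') = Phi n m * Phi n m' := by
  rw [Phi, Phi, Phi, ← Finset.prod_mul_distrib]
  refine Finset.prod_congr rfl fun j _ => ?_
  rw [← Complex.exp_add]
  have h1 : Complex.exp (2 * Real.pi * Complex.I * (((m + m') j).val : ℂ) / ((n j : ℕ) : ℂ)) =
      Complex.exp (2 * Real.pi * Complex.I * ((((m j).val + (m' j).val : ℕ)) : ℂ) / ((n j : ℕ) : ℂ)) := by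
    have := exp_congr (n j) ((((m + m') j).val : ℤ)) (((m j).val + (m' j).val : ℕ) : ℤ) ?_
    · push_cast at this ⊢; exact this
    · push_cast [ZMod.natCast_val]
      simp [ZMod.natCast_val]
  rw [h1]
  congr 1
  push_cast
  ring

lemma chi_eq_Phi {k : ℕ} (n : Fin k → ℕ) [∀ j, NeZero (n j)] (g h : ∀ j, ZMod (n j)) :
    chi n g h = Phi n (g * h) := by
  refine Finset.prod_congr rfl fun j _ => ?_
  have := exp_congr (n j) (((g j).val * (h j).val : ℕ) : ℤ) ((((g * h) j).val : ℤ)) ?_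
  · push_cast at this ⊢
    rw [← this]; congr 1; ring
  · push_cast [ZMod.natCast_val]
    simp [ZMod.natCast_val]

theorem stmt19 {k : ℕ} (n : Fin k → ℕ) [∀ j, NeZero (n j)]
    {X : Type*} [Fintype X] [DecidableEq X]
    (act : (∀ j, ZMod (n j)) → X → X) (x : X)
    (hid : ∀ y, act 0 y = y)
    (hcomp : ∀ g h y, act (g + h) y = act g (act h y))
    (hreg : Function.Bijective fun g => act g x)
    (a h : ∀ j, ZMod (n j)) (σ : X → X)
    (hσ : ∀ g, σ (act g x) = act (a - g) x) :
    ∀ z, vstate n act x (-h) (σ z) = chi n a (-h) * vstate n act x h z := by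
  intro z
  obtain ⟨g0, rfl⟩ := hreg.2 z
  simp only at *
  have hinj : ∀ g g' : ∀ j, ZMod (n j), act g x = act g' x → g = g' := fun g g' hg =>
    hreg.1 hg
  have sum1 : ∀ w : ∀ j, ZMod (n j),
      (∑ g, chi n g (-h) * (if act w x = act g x then (1:ℂ) else 0)) = chi n w (-h) := by
    intro w
    rw [Finset.sum_eq_single w]
    · simp
    · intro b _ hb
      have : act w x ≠ act b x := fun hc => hb (hinj _ _ hc.symm)
      simp [this]
    · simp
  have sum2 : (∑ g, chi n g h * (if act g0 x = act g x then (1:ℂ) else 0)) = chi n g0 h := by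
    rw [Finset.sum_eq_single g0]
    · simp
    · intro b _ hb
      have : act g0 x ≠ act b x := fun hc => hb (hinj _ _ hc.symm)
      simp [this]
    · simp
  have key : chi n (a - g0) (-h) = chi n a (-h) * chi n g0 h := by
    rw [chi_eq_Phi, chi_eq_Phi, chi_eq_Phi]
    have : (a - g0) * (-h) = a * (-h) + g0 * h := by ring
    rw [this, Phi_add]
  rw [vstate, vstate, hσ, sum1, sum2, key]
  ring
end
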